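/- arXiv:1201.1212 — 6 statements merged into one kernel-verified Lean document; each statement's English description precedes it below -/
import Mathlib

section
/- Let ρ = (1/2)(I + x₁σ_x + x₂σ_y + x₃σ_z) and ρ' = (1/2)(I + x'₁σ_x + x'₂σ_y + x'₃σ_z) be qubit density matrices given by Bloch vectors x, x' ∈ ℝ³ with |x| ≤ 1 and |x'| ≤ 1. If |x|² + |x'|² ≤ 1 + (x·x')², then the anticommutator {ρ,ρ'} = ρρ' + ρ'ρ is positive semidefinite. -/
/-
Write `σ(v) = v₁σ_x + v₂σ_y + v₃σ_z`. The Pauli relations give `σ(v)σ(w) + σ(w)σ(v) = 2 (v·w) I`,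
hence `{ρ, ρ'} = ½ ((1 + x·x') I + σ(x + x'))`. If `V` is Hermitian with `V² = c I` and
`0 ≤ c ≤ a²`, `0 ≤ a`, then `M = a I + V` is positive semidefinite: for `a > 0` because
`2a M = Mᴴ M + (a² - c) I`, and for `a = 0` because `Vᴴ V = 0` forces `V = 0`.
Here `c = |x + x'|² = |x|² + |x'|² + 2 x·x'`, which is at most `(1 + x·x')²` by hypothesis, and
`1 + x·x' ≥ 0` by Cauchy–Schwarz.
-/

open Matrix ComplexOrder

/-- The Pauli matrix `σ_x`. -/
noncomputable def pauliX : Matrix (Fin 2) (Fin 2) ℂ := !![0, 1; 1, 0]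

/-- The Pauli matrix `σ_y`. -/
noncomputable def pauliY : Matrix (Fin 2) (Fin 2) ℂ := !![0, -Complex.I; Complex.I, 0]

/-- The Pauli matrix `σ_z`. -/
noncomputable def pauliZ : Matrix (Fin 2) (Fin 2) ℂ := !![1, 0; 0, -1]

/-- The qubit state with Bloch vector `x`:
`ρ = (1/2)(I + x₁ σ_x + x₂ σ_y + x₃ σ_z)`. -/
noncomputable def blochState (x : Fin 3 → ℝ) : Matrix (Fin 2) (Fin 2) ℂ :=
  (1 / 2 : ℂ) • (1 + (x 0 : ℂ) • pauliX + (x 1 : ℂ) • pauliY + (x 2 : ℂ) • pauliZ)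

theorem Matrix.posSemidef_smul_one_add_of_mul_self_eq {n 𝕜 : Type*} [Fintype n] [DecidableEq n]
    [RCLike 𝕜] {V : Matrix n n 𝕜} (hV : V.IsHermitian) {a c : ℝ} (hsq : V * V = c • 1)
    (ha : 0 ≤ a) (hc : 0 ≤ c) (hca : c ≤ a ^ 2) :
    (a • 1 + V).PosSemidef := by
  rcases ha.eq_or_lt with rfl | ha
  · have hc0 : c = 0 := by nlinarith
    have hV0 : V = 0 := by
      rw [← conjTranspose_mul_self_eq_zero, hV.eq, hsq, hc0, zero_smul]
    simpa [hV0] using PosSemidef.zero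
  · set M : Matrix n n 𝕜 := a • 1 + V
    have hMM : Mᴴ * M = (a ^ 2 + c) • 1 + (2 * a) • V := by
      simp only [M, conjTranspose_add, conjTranspose_smul, conjTranspose_one, hV.eq, star_trivial,
        add_mul, mul_add, smul_mul_assoc, mul_smul_comm, one_mul, mul_one, hsq]
      module
    have hM : M = (2 * a)⁻¹ • (Mᴴ * M) + ((a ^ 2 - c) / (2 * a)) • 1 := by
      rw [hMM]
      match_scalars <;> field_simp
      ring
    rw [hM]
    exact ((posSemidef_conjTranspose_mul_self M).smul (by positivity)).add
      (PosSemidef.one.smul (div_nonneg (by linarith) (by positivity)))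

noncomputable def pauliDot (v : Fin 3 → ℝ) : Matrix (Fin 2) (Fin 2) ℂ :=
  (v 0 : ℂ) • pauliX + (v 1 : ℂ) • pauliY + (v 2 : ℂ) • pauliZ

theorem isHermitian_pauliDot (v : Fin 3 → ℝ) : (pauliDot v).IsHermitian := by
  ext i j
  fin_cases i <;> fin_cases j <;> simp [pauliDot, pauliX, pauliY, pauliZ]

theorem pauliDot_add (v w : Fin 3 → ℝ) : pauliDot (v + w) = pauliDot v + pauliDot w := by
  simp only [pauliDot, Pi.add_apply, Complex.ofReal_add, add_smul]
  abel

theorem pauliDot_mul_add_mul_swap (v w : Fin 3 → ℝ) :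
    pauliDot v * pauliDot w + pauliDot w * pauliDot v = (2 * v ⬝ᵥ w) • 1 := by
  ext i j
  fin_cases i <;> fin_cases j <;>
    simp [pauliDot, pauliX, pauliY, pauliZ, dotProduct, Fin.sum_univ_three, Complex.ext_iff] <;>
    constructor <;> ring

theorem pauliDot_mul_self (v : Fin 3 → ℝ) : pauliDot v * pauliDot v = (v ⬝ᵥ v) • 1 := by
  have h := pauliDot_mul_add_mul_swap v v
  rw [← two_smul ℝ, mul_smul] at h
  exact smul_right_injective _ two_ne_zero h

theorem blochState_eq_smul_one_add_pauliDot (x : Fin 3 → ℝ) :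
    blochState x = (1 / 2 : ℝ) • (1 + pauliDot x) := by
  rw [blochState, pauliDot, ← Complex.coe_smul]
  push_cast
  simp only [add_assoc]

theorem blochState_mul_add_mul_swap (x x' : Fin 3 → ℝ) :
    blochState x * blochState x' + blochState x' * blochState x
      = (1 / 2 : ℝ) • ((1 + x ⬝ᵥ x') • 1 + pauliDot (x + x')) := by
  simp only [blochState_eq_smul_one_add_pauliDot, smul_mul_smul, add_mul, mul_add, one_mul,
    mul_one]
  rw [pauliDot_add]
  linear_combination (norm := module) (1 / 4 : ℝ) • pauliDot_mul_add_mul_swap x x'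

/-- For qubit density matrices `ρ`, `ρ'` with Bloch vectors `x`, `x'`
(`|x| ≤ 1`, `|x'| ≤ 1`), if `|x|² + |x'|² ≤ 1 + (x·x')²`, then the anticommutator
`{ρ, ρ'} = ρρ' + ρ'ρ` is positive semidefinite. -/
theorem qubit_anticommutator_posSemidef (x x' : Fin 3 → ℝ)
    (hx : ∑ i, x i ^ 2 ≤ 1) (hx' : ∑ i, x' i ^ 2 ≤ 1)
    (h : (∑ i, x i ^ 2) + (∑ i, x' i ^ 2) ≤ 1 + (∑ i, x i * x' i) ^ 2) :
    (blochState x * blochState x' + blochState x' * blochState x).PosSemidef := by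
  have hcs : (x ⬝ᵥ x') ^ 2 ≤ 1 :=
    (Finset.sum_mul_sq_le_sq_mul_sq _ x x').trans (mul_le_one₀ hx (by positivity) hx')
  have h' : x ⬝ᵥ x + x' ⬝ᵥ x' ≤ 1 + (x ⬝ᵥ x') ^ 2 := by simpa only [dotProduct, sq] using h
  have hnorm_add : (x + x') ⬝ᵥ (x + x') = x ⬝ᵥ x + x' ⬝ᵥ x' + 2 * x ⬝ᵥ x' := by
    simp only [add_dotProduct, dotProduct_add, dotProduct_comm x' x]
    ring
  rw [blochState_mul_add_mul_swap]
  refine PosSemidef.smul ?_ (by norm_num)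
  refine posSemidef_smul_one_add_of_mul_self_eq (isHermitian_pauliDot _) (pauliDot_mul_self _)
    (by nlinarith) (by simpa using dotProduct_self_star_nonneg (x + x')) ?_
  rw [hnorm_add]
  linear_combination h'
end

section
/- (Theorem 1) Let ρ₁ = |ψ⟩⟨ψ| be a pure state on ℂ^d (ψ a unit vector) and let ρ₂ be any density matrix on ℂ^d. Then the anticommutator {ρ₁,ρ₂} = ρ₁ρ₂ + ρ₂ρ₁ is positive semidefinite if and only if ρ₁ and ρ₂ commute, i.e., ρ₁ρ₂ = ρ₂ρ₁. -/
open Matrix ComplexOrder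

/-!
Write `P = |ψ⟩⟨ψ|` and `Q = 1 - P`. Since `QP = PQ = 0`, the compression `Q {P, ρ} Q` vanishes, and a
positive semidefinite matrix whose compression by `Q` vanishes is annihilated by `Q`. Hence
`{P, ρ} Q = P ρ Q = 0`, i.e. `P ρ = P ρ P`, and taking adjoints `ρ P = P ρ P`. Conversely, if `P`
and `ρ` commute then `P ρ = Pᴴ ρ P`, which is positive semidefinite.
-/

/-- The pure state (rank-one orthogonal projection) `|ψ⟩⟨ψ|` associated with a vector
`ψ : Fin d → ℂ`; its `(i, j)` entry is `ψ i * conj (ψ j)`. -/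
noncomputable def pureState {d : ℕ} (ψ : Fin d → ℂ) : Matrix (Fin d) (Fin d) ℂ :=
  vecMulVec ψ (star ψ)

theorem IsStarProjection.commute_of_mul_mul_one_sub_eq_zero {R : Type*} [Ring R] [StarRing R]
    {p a : R} (hp : IsStarProjection p) (ha : IsSelfAdjoint a) (h : p * a * (1 - p) = 0) :
    Commute p a := by
  have hpa : p * a = p * a * p := by rwa [mul_one_sub, sub_eq_zero] at h
  have hap : a * p = p * a * p := by
    simpa [star_mul, hp.isSelfAdjoint.star_eq, ha.star_eq, mul_assoc] using congrArg star hpa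
  exact hpa.trans hap.symm

namespace Matrix

variable {m n 𝕜 : Type*} [Fintype m] [Fintype n] [RCLike 𝕜]

theorem PosSemidef.mul_eq_zero_of_conjTranspose_mul_mul_eq_zero {S : Matrix n n 𝕜}
    {Q : Matrix n m 𝕜} (hS : S.PosSemidef) (h : Qᴴ * S * Q = 0) : S * Q = 0 := by
  refine mulVec_injective (funext fun x => ?_)
  rw [← mulVec_mulVec, zero_mulVec, ← hS.dotProduct_mulVec_zero_iff, star_mulVec,
    ← dotProduct_mulVec, mulVec_mulVec, mulVec_mulVec, h, zero_mulVec,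
    dotProduct_zero]

theorem posSemidef_mul_add_mul_of_commute {P A : Matrix n n 𝕜} (hP : IsStarProjection P)
    (hA : A.PosSemidef) (hc : Commute P A) : (P * A + A * P).PosSemidef := by
  have hPA : P * A = Pᴴ * A * P := by
    rw [← star_eq_conjTranspose, hP.isSelfAdjoint.star_eq, Matrix.mul_assoc, ← hc.eq,
      ← Matrix.mul_assoc, hP.isIdempotentElem.eq]
  rw [← hc.eq, hPA]
  exact (hA.conjTranspose_mul_mul_same P).add (hA.conjTranspose_mul_mul_same P)

variable [DecidableEq n]

theorem commute_of_posSemidef_mul_add_mul {P A : Matrix n n 𝕜} (hP : IsStarProjection P)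
    (hA : A.IsHermitian) (h : (P * A + A * P).PosSemidef) : Commute P A := by
  have hQP : (1 - P) * P = 0 := hP.one_sub_mul_self
  have hPQ : P * (1 - P) = 0 := hP.mul_one_sub_self
  have hcompress : (1 - P)ᴴ * (P * A + A * P) * (1 - P) = 0 := by
    rw [← star_eq_conjTranspose, hP.one_sub.isSelfAdjoint.star_eq]
    simp only [Matrix.mul_add, ← Matrix.mul_assoc, hQP, Matrix.zero_mul, zero_add]
    rw [Matrix.mul_assoc, hPQ, Matrix.mul_zero]
  have hkernel := h.mul_eq_zero_of_conjTranspose_mul_mul_eq_zero hcompress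
  rw [Matrix.add_mul, Matrix.mul_assoc A, hPQ, Matrix.mul_zero, add_zero] at hkernel
  exact hP.commute_of_mul_mul_one_sub_eq_zero hA hkernel

end Matrix

theorem isStarProjection_pureState {d : ℕ} {ψ : Fin d → ℂ} (hψ : star ψ ⬝ᵥ ψ = 1) :
    IsStarProjection (pureState ψ) where
  isIdempotentElem := by
    rw [pureState, IsIdempotentElem, vecMulVec_mul_vecMulVec, hψ, one_smul]
  isSelfAdjoint := by
    rw [pureState, IsSelfAdjoint, star_eq_conjTranspose, conjTranspose_vecMulVec, star_star]

theorem pure_state_anticommutator_posSemidef_iff_commute_general {d : ℕ} (ψ : Fin d → ℂ)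
    (hψ : star ψ ⬝ᵥ ψ = 1)
    (ρ₂ : Matrix (Fin d) (Fin d) ℂ) (hρ₂ : ρ₂.PosSemidef) :
    (pureState ψ * ρ₂ + ρ₂ * pureState ψ).PosSemidef ↔
      pureState ψ * ρ₂ = ρ₂ * pureState ψ := by
  have hP := isStarProjection_pureState hψ
  exact ⟨fun h => (commute_of_posSemidef_mul_add_mul hP hρ₂.isHermitian h).eq,
    posSemidef_mul_add_mul_of_commute hP hρ₂⟩

/-- Theorem 1: For a pure state `ρ₁ = |ψ⟩⟨ψ|` (`ψ` a unit vector) and any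
density matrix `ρ₂`, the anticommutator `ρ₁ρ₂ + ρ₂ρ₁` is positive semidefinite if and
only if `ρ₁` and `ρ₂` commute. -/
theorem pure_state_anticommutator_posSemidef_iff_commute {d : ℕ} (ψ : Fin d → ℂ)
    (hψ : star ψ ⬝ᵥ ψ = 1)
    (ρ₂ : Matrix (Fin d) (Fin d) ℂ) (hρ₂ : ρ₂.PosSemidef) (hρ₂tr : ρ₂.trace = 1) :
    (pureState ψ * ρ₂ + ρ₂ * pureState ψ).PosSemidef ↔
      pureState ψ * ρ₂ = ρ₂ * pureState ψ :=
  pure_state_anticommutator_posSemidef_iff_commute_general ψ hψ ρ₂ hρ₂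
end

section
/- (Theorem 3, asymptotic form) Let ψ₁, ψ₂ be unit vectors in ℂ^d with f = ⟨ψ₁, ψ₂⟩ satisfying 0 < |f| < 1, and let η₁, η₂ be density matrices on ℂ^d with η₁ψ₁ = 0 and η₂ψ₂ = 0. Set g₁ = ⟨ψ₂, η₁ψ₂⟩ and g₂ = ⟨ψ₁, η₂ψ₁⟩. Then there exists ε₀ > 0 (depending on ψ₁, ψ₂, η₁, η₂) such that for all ε₁, ε₂ with 0 < ε₁, ε₂ < ε₀ and ε₁g₁ + ε₂g₂ < (1 − |f|²)/2, the states ρᵢ = (1 − εᵢ)|ψᵢ⟩⟨ψᵢ| + εᵢηᵢ (i = 1,2) have an anticommutator {ρ₁,ρ₂} = ρ₁ρ₂ + ρ₂ρ₁ that is NOT positive semidefinite. -/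
open Matrix ComplexOrder

/-- The mixed state `ρ = (1 − ε)|ψ⟩⟨ψ| + ε η`. -/
noncomputable def mixState {d : ℕ} (ψ : Fin d → ℂ) (η : Matrix (Fin d) (Fin d) ℂ)
    (ε : ℝ) : Matrix (Fin d) (Fin d) ℂ :=
  (1 - (ε : ℂ)) • pureState ψ + (ε : ℂ) • η

/-!
At `ε₁ = ε₂ = 0` the anticommutator of the two pure states already has a negative direction:
with `f = ⟨ψ₁, ψ₂⟩` and `v = |f| ψ₁ - f̄ ψ₂` one gets `⟨v, {P₁, P₂} v⟩ = -2|f|³(1 - |f|)² < 0`.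
The quadratic form at `v` depends continuously on `(ε₁, ε₂)`, so it stays negative nearby.
-/

lemma dotProduct_pureState_mul_pureState_mulVec {d : ℕ} (a b v : Fin d → ℂ) :
    star v ⬝ᵥ (pureState a * pureState b) *ᵥ v
      = (star v ⬝ᵥ a) * (star a ⬝ᵥ b) * (star b ⬝ᵥ v) := by
  simp only [pureState, ← mulVec_mulVec, vecMulVec_mulVec, MulOpposite.smul_eq_mul_unop,
    MulOpposite.unop_op, mulVec_smul, dotProduct_smul]

lemma exists_re_dotProduct_anticommutator_pureState_mulVec_neg {d : ℕ} {a b : Fin d → ℂ}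
    (ha : star a ⬝ᵥ a = 1) (hb : star b ⬝ᵥ b = 1)
    (hf0 : 0 < ‖star a ⬝ᵥ b‖) (hf1 : ‖star a ⬝ᵥ b‖ < 1) :
    ∃ v, (star v ⬝ᵥ (pureState a * pureState b + pureState b * pureState a) *ᵥ v).re < 0 := by
  generalize hab : star a ⬝ᵥ b = f at hf0 hf1
  set r := ‖f‖
  have hba : star b ⬝ᵥ a = star f := by rw [star_dotProduct, hab]
  have hff : star f * f = (r : ℂ) ^ 2 := by rw [mul_comm]; exact Complex.mul_conj' f
  set v := (r : ℂ) • a - star f • b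
  have hav : star a ⬝ᵥ v = r - r ^ 2 := by
    simp only [v, dotProduct_sub, dotProduct_smul, ha, hab, smul_eq_mul, hff]; ring
  have hbv : star b ⬝ᵥ v = star f * (r - 1) := by
    simp only [v, dotProduct_sub, dotProduct_smul, hb, hba, smul_eq_mul]; ring
  have hva : star v ⬝ᵥ a = r - r ^ 2 := by rw [star_dotProduct, hav]; simp
  have hvb : star v ⬝ᵥ b = f * (r - 1) := by rw [star_dotProduct, hbv]; simp
  have hQ : star v ⬝ᵥ (pureState a * pureState b + pureState b * pureState a) *ᵥ v
      = ((-2 * r ^ 3 * (1 - r) ^ 2 : ℝ) : ℂ) := by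
    rw [add_mulVec, dotProduct_add, dotProduct_pureState_mul_pureState_mulVec,
      dotProduct_pureState_mul_pureState_mulVec, hav, hbv, hva, hvb, hab, hba]
    push_cast
    linear_combination (-2 * (r : ℂ) * (1 - r) ^ 2) * hff
  refine ⟨v, ?_⟩
  rw [hQ, Complex.ofReal_re]
  have : 0 < r ^ 3 * (1 - r) ^ 2 := by have := sub_pos.2 hf1; positivity
  linarith

lemma eventually_not_posSemidef_of_continuousAt {n X : Type*} [Fintype n] [TopologicalSpace X]
    {M : X → Matrix n n ℂ} {x : X} (hM : ContinuousAt M x) {v : n → ℂ}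
    (hv : (star v ⬝ᵥ M x *ᵥ v).re < 0) : ∀ᶠ y in nhds x, ¬ (M y).PosSemidef := by
  have hQ : ContinuousAt (fun y ↦ (star v ⬝ᵥ M y *ᵥ v).re) x := by fun_prop
  filter_upwards [hQ.eventually_lt continuousAt_const hv] with y hy hMy
  exact hy.not_ge (Complex.nonneg_iff.1 (hMy.dotProduct_mulVec_nonneg v)).1

@[fun_prop]
lemma continuous_mixState {d : ℕ} (ψ : Fin d → ℂ) (η : Matrix (Fin d) (Fin d) ℂ) :
    Continuous (mixState ψ η) := by
  unfold mixState; fun_prop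

lemma mixState_zero {d : ℕ} (ψ : Fin d → ℂ) (η : Matrix (Fin d) (Fin d) ℂ) :
    mixState ψ η 0 = pureState ψ := by
  simp [mixState]

theorem anticommutator_not_posSemidef_near_pure_general {d : ℕ} (ψ₁ ψ₂ : Fin d → ℂ)
    (hψ₁ : star ψ₁ ⬝ᵥ ψ₁ = 1) (hψ₂ : star ψ₂ ⬝ᵥ ψ₂ = 1)
    (hf0 : 0 < ‖star ψ₁ ⬝ᵥ ψ₂‖) (hf1 : ‖star ψ₁ ⬝ᵥ ψ₂‖ < 1)
    (η₁ η₂ : Matrix (Fin d) (Fin d) ℂ) :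
    ∃ ε₀ > (0 : ℝ), ∀ ε₁ ε₂ : ℝ, 0 < ε₁ → ε₁ < ε₀ → 0 < ε₂ → ε₂ < ε₀ →
      ε₁ * (star ψ₂ ⬝ᵥ η₁ *ᵥ ψ₂).re + ε₂ * (star ψ₁ ⬝ᵥ η₂ *ᵥ ψ₁).re
          < (1 - ‖star ψ₁ ⬝ᵥ ψ₂‖ ^ 2) / 2 →
      ¬ (mixState ψ₁ η₁ ε₁ * mixState ψ₂ η₂ ε₂ +
          mixState ψ₂ η₂ ε₂ * mixState ψ₁ η₁ ε₁).PosSemidef := by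
  obtain ⟨v, hv⟩ := exists_re_dotProduct_anticommutator_pureState_mulVec_neg hψ₁ hψ₂ hf0 hf1
  let M : ℝ × ℝ → Matrix (Fin d) (Fin d) ℂ := fun ε ↦
    mixState ψ₁ η₁ ε.1 * mixState ψ₂ η₂ ε.2 + mixState ψ₂ η₂ ε.2 * mixState ψ₁ η₁ ε.1
  have hM : ContinuousAt M 0 := by fun_prop
  have hv0 : (star v ⬝ᵥ M 0 *ᵥ v).re < 0 := by simpa [M, mixState_zero] using hv
  obtain ⟨ε₀, hε₀, hball⟩ := Metric.eventually_nhds_iff.1 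
    (eventually_not_posSemidef_of_continuousAt hM hv0)
  refine ⟨ε₀, hε₀, fun ε₁ ε₂ hε₁ hε₁' hε₂ hε₂' _ ↦ hball (y := (ε₁, ε₂)) ?_⟩
  simpa [Prod.dist_eq, abs_of_pos, hε₁, hε₂] using ⟨hε₁', hε₂'⟩

/-- Theorem 3, asymptotic form: Let `ψ₁, ψ₂` be unit vectors with
`f = ⟨ψ₁, ψ₂⟩`, `0 < |f| < 1`, and let `η₁, η₂` be density matrices with `η₁ψ₁ = 0`,
`η₂ψ₂ = 0`; set `g₁ = ⟨ψ₂, η₁ψ₂⟩`, `g₂ = ⟨ψ₁, η₂ψ₁⟩`.  Then there is `ε₀ > 0` such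
that for all `0 < ε₁, ε₂ < ε₀` with `ε₁g₁ + ε₂g₂ < (1 − |f|²)/2`, the anticommutator
of `ρᵢ = (1 − εᵢ)|ψᵢ⟩⟨ψᵢ| + εᵢηᵢ` is not positive semidefinite. -/
theorem anticommutator_not_posSemidef_near_pure {d : ℕ} (ψ₁ ψ₂ : Fin d → ℂ)
    (hψ₁ : star ψ₁ ⬝ᵥ ψ₁ = 1) (hψ₂ : star ψ₂ ⬝ᵥ ψ₂ = 1)
    (hf0 : 0 < ‖star ψ₁ ⬝ᵥ ψ₂‖) (hf1 : ‖star ψ₁ ⬝ᵥ ψ₂‖ < 1)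
    (η₁ η₂ : Matrix (Fin d) (Fin d) ℂ)
    (hη₁ : η₁.PosSemidef) (hη₁tr : η₁.trace = 1) (hη₁ψ : η₁ *ᵥ ψ₁ = 0)
    (hη₂ : η₂.PosSemidef) (hη₂tr : η₂.trace = 1) (hη₂ψ : η₂ *ᵥ ψ₂ = 0) :
    ∃ ε₀ > (0 : ℝ), ∀ ε₁ ε₂ : ℝ, 0 < ε₁ → ε₁ < ε₀ → 0 < ε₂ → ε₂ < ε₀ →
      ε₁ * (star ψ₂ ⬝ᵥ η₁ *ᵥ ψ₂).re + ε₂ * (star ψ₁ ⬝ᵥ η₂ *ᵥ ψ₁).re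
          < (1 - ‖star ψ₁ ⬝ᵥ ψ₂‖ ^ 2) / 2 →
      ¬ (mixState ψ₁ η₁ ε₁ * mixState ψ₂ η₂ ε₂ +
          mixState ψ₂ η₂ ε₂ * mixState ψ₁ η₁ ε₁).PosSemidef :=
  anticommutator_not_posSemidef_near_pure_general ψ₁ ψ₂ hψ₁ hψ₂ hf0 hf1 η₁ η₂
end

section
/- (Appendix, case |f| = 1: exact identity) Let ψ₁ be a unit vector in ℂ^d and ψ₂ = c ψ₁ with |c| = 1, let η₁, η₂ be density matrices with η₁ψ₁ = 0 and η₂ψ₂ = 0, let ε₁, ε₂ ∈ [0,1], and set ρᵢ = (1 − εᵢ)|ψᵢ⟩⟨ψᵢ| + εᵢηᵢ. Then tr[{ρ₁,ρ₂}²] − (tr[{ρ₁,ρ₂}])² = ε₁²ε₂²( tr[{η₁,η₂}²] − (tr[{η₁,η₂}])² ) − 4ε₁ε₂(1−ε₁)(1−ε₂) tr[{η₁,η₂}]. -/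
/-!
Since `ψ₂` is a phase multiple of `ψ₁`, both states are built on the same projection
`P = |ψ₁⟩⟨ψ₁|`, and each `ηᵢ` (being Hermitian with `ηᵢψ₁ = 0`) annihilates `P` on both sides.
Hence `{ρ₁, ρ₂} = 2(1 − ε₁)(1 − ε₂) P + ε₁ε₂ {η₁, η₂}` is an orthogonal sum, whose square and
trace split accordingly; the `P`-contributions cancel in `tr[X²] − (tr X)²`, leaving only the
cross term of `(tr X)²`.
-/

open Matrix ComplexOrder

section OrthogonalDecomposition

variable {R A : Type*} [CommRing R] [NonUnitalRing A] [Module R A] [IsScalarTower R A A]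
  [SMulCommClass R A A]

theorem anticomm_smul_add_smul_of_orthogonal {P η₁ η₂ : A} (hP : P * P = P)
    (hη₁P : η₁ * P = 0) (hPη₁ : P * η₁ = 0) (hη₂P : η₂ * P = 0) (hPη₂ : P * η₂ = 0)
    (a₁ a₂ b₁ b₂ : R) :
    (a₁ • P + b₁ • η₁) * (a₂ • P + b₂ • η₂) + (a₂ • P + b₂ • η₂) * (a₁ • P + b₁ • η₁)
      = (2 * a₁ * a₂) • P + (b₁ * b₂) • (η₁ * η₂ + η₂ * η₁) := by
  simp only [add_mul, mul_add, smul_mul_assoc, mul_smul_comm, hP, hη₁P, hPη₁, hη₂P, hPη₂,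
    smul_zero, add_zero, zero_add, smul_smul]
  module

theorem smul_add_smul_mul_self_of_orthogonal {P B : A} (hP : P * P = P) (hPB : P * B = 0)
    (hBP : B * P = 0) (x y : R) :
    (x • P + y • B) * (x • P + y • B) = (x ^ 2) • P + (y ^ 2) • (B * B) := by
  simp only [add_mul, mul_add, smul_mul_assoc, mul_smul_comm, hP, hPB, hBP, smul_zero,
    add_zero, zero_add, smul_smul]
  module

end OrthogonalDecomposition

theorem trace_mul_self_sub_trace_sq_of_orthogonal {n R : Type*} [Fintype n] [CommRing R]
    {P B : Matrix n n R} (hP : P * P = P) (hPtr : P.trace = 1) (hPB : P * B = 0)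
    (hBP : B * P = 0) (x y : R) :
    ((x • P + y • B) * (x • P + y • B)).trace - (x • P + y • B).trace ^ 2
      = y ^ 2 * ((B * B).trace - B.trace ^ 2) - 2 * x * y * B.trace := by
  rw [smul_add_smul_mul_self_of_orthogonal hP hPB hBP]
  simp only [trace_add, trace_smul, hPtr, smul_eq_mul]
  ring

section PureState

variable {d : ℕ}

theorem pureState_smul {c : ℂ} (hc : ‖c‖ = 1) (ψ : Fin d → ℂ) :
    pureState (c • ψ) = pureState ψ := by
  have hcc : c * star c = 1 := by
    rw [Complex.star_def, Complex.mul_conj, Complex.normSq_eq_norm_sq, hc]; norm_num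
  ext i j
  simp only [pureState, vecMulVec_apply, Pi.smul_apply, Pi.star_apply, smul_eq_mul, star_mul']
  linear_combination ψ i * star (ψ j) * hcc

theorem mixState_smul {c : ℂ} (hc : ‖c‖ = 1) (ψ : Fin d → ℂ) (η : Matrix (Fin d) (Fin d) ℂ)
    (ε : ℝ) : mixState (c • ψ) η ε = mixState ψ η ε := by
  rw [mixState, mixState, pureState_smul hc]

theorem pureState_mul_self {ψ : Fin d → ℂ} (hψ : star ψ ⬝ᵥ ψ = 1) :
    pureState ψ * pureState ψ = pureState ψ := by
  rw [pureState, vecMulVec_mul_vecMulVec, hψ, one_smul]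

theorem trace_pureState {ψ : Fin d → ℂ} (hψ : star ψ ⬝ᵥ ψ = 1) : (pureState ψ).trace = 1 := by
  rw [pureState, trace_vecMulVec, dotProduct_comm, hψ]

theorem mul_pureState_of_mulVec_eq_zero {ψ : Fin d → ℂ} {η : Matrix (Fin d) (Fin d) ℂ}
    (h : η *ᵥ ψ = 0) : η * pureState ψ = 0 := by
  rw [pureState, mul_vecMulVec, h, zero_vecMulVec]

theorem pureState_mul_of_mulVec_eq_zero {ψ : Fin d → ℂ} {η : Matrix (Fin d) (Fin d) ℂ}
    (hη : η.IsHermitian) (h : η *ᵥ ψ = 0) : pureState ψ * η = 0 := by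
  have hPη : (η * pureState ψ)ᴴ = 0 := by rw [mul_pureState_of_mulVec_eq_zero h, conjTranspose_zero]
  rwa [conjTranspose_mul, hη.eq, pureState, conjTranspose_vecMulVec, star_star] at hPη

end PureState

theorem purity_identity_parallel_case_general {d : ℕ} (ψ₁ ψ₂ : Fin d → ℂ)
    (hψ₁ : star ψ₁ ⬝ᵥ ψ₁ = 1) (c : ℂ) (hc : ‖c‖ = 1) (hψ₂ : ψ₂ = c • ψ₁)
    (η₁ η₂ : Matrix (Fin d) (Fin d) ℂ)
    (hη₁ : η₁.PosSemidef) (hη₁ψ : η₁ *ᵥ ψ₁ = 0)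
    (hη₂ : η₂.PosSemidef) (hη₂ψ : η₂ *ᵥ ψ₂ = 0)
    (ε₁ ε₂ : ℝ) :
    ((mixState ψ₁ η₁ ε₁ * mixState ψ₂ η₂ ε₂ + mixState ψ₂ η₂ ε₂ * mixState ψ₁ η₁ ε₁) *
        (mixState ψ₁ η₁ ε₁ * mixState ψ₂ η₂ ε₂ +
          mixState ψ₂ η₂ ε₂ * mixState ψ₁ η₁ ε₁)).trace
      - ((mixState ψ₁ η₁ ε₁ * mixState ψ₂ η₂ ε₂ +
          mixState ψ₂ η₂ ε₂ * mixState ψ₁ η₁ ε₁).trace) ^ 2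
      = (ε₁ : ℂ) ^ 2 * (ε₂ : ℂ) ^ 2 *
          (((η₁ * η₂ + η₂ * η₁) * (η₁ * η₂ + η₂ * η₁)).trace
            - ((η₁ * η₂ + η₂ * η₁).trace) ^ 2)
        - 4 * (ε₁ : ℂ) * (ε₂ : ℂ) * (1 - (ε₁ : ℂ)) * (1 - (ε₂ : ℂ)) *
            (η₁ * η₂ + η₂ * η₁).trace := by
  have hc0 : c ≠ 0 := by rintro rfl; simp at hc
  have hη₂ψ₁ : η₂ *ᵥ ψ₁ = 0 := by
    rwa [hψ₂, mulVec_smul, smul_eq_zero_iff_right hc0] at hη₂ψ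
  set P := pureState ψ₁
  have hPη₁ : P * η₁ = 0 := pureState_mul_of_mulVec_eq_zero hη₁.isHermitian hη₁ψ
  have hPη₂ : P * η₂ = 0 := pureState_mul_of_mulVec_eq_zero hη₂.isHermitian hη₂ψ₁
  have hη₁P : η₁ * P = 0 := mul_pureState_of_mulVec_eq_zero hη₁ψ
  have hη₂P : η₂ * P = 0 := mul_pureState_of_mulVec_eq_zero hη₂ψ₁
  have hPP : P * P = P := pureState_mul_self hψ₁
  have hPB : P * (η₁ * η₂ + η₂ * η₁) = 0 := by
    rw [mul_add, ← mul_assoc, ← mul_assoc, hPη₁, hPη₂, zero_mul, zero_mul, add_zero]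
  have hBP : (η₁ * η₂ + η₂ * η₁) * P = 0 := by
    rw [add_mul, mul_assoc, mul_assoc, hη₂P, hη₁P, mul_zero, mul_zero, add_zero]
  rw [hψ₂, mixState_smul hc, mixState, mixState,
    anticomm_smul_add_smul_of_orthogonal hPP hη₁P hPη₁ hη₂P hPη₂,
    trace_mul_self_sub_trace_sq_of_orthogonal hPP (trace_pureState hψ₁) hPB hBP]
  ring

/-- Appendix, case `|f| = 1`, exact identity: For a unit vector `ψ₁`,
`ψ₂ = c ψ₁` with `|c| = 1`, density matrices `η₁, η₂` with `η₁ψ₁ = 0`, `η₂ψ₂ = 0`,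
`ε₁, ε₂ ∈ [0,1]`, and `ρᵢ = (1 − εᵢ)|ψᵢ⟩⟨ψᵢ| + εᵢηᵢ`:
`tr[{ρ₁,ρ₂}²] − (tr[{ρ₁,ρ₂}])²
  = ε₁²ε₂²(tr[{η₁,η₂}²] − (tr[{η₁,η₂}])²) − 4ε₁ε₂(1−ε₁)(1−ε₂) tr[{η₁,η₂}]`. -/
theorem purity_identity_parallel_case {d : ℕ} (ψ₁ ψ₂ : Fin d → ℂ)
    (hψ₁ : star ψ₁ ⬝ᵥ ψ₁ = 1) (c : ℂ) (hc : ‖c‖ = 1) (hψ₂ : ψ₂ = c • ψ₁)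
    (η₁ η₂ : Matrix (Fin d) (Fin d) ℂ)
    (hη₁ : η₁.PosSemidef) (hη₁tr : η₁.trace = 1) (hη₁ψ : η₁ *ᵥ ψ₁ = 0)
    (hη₂ : η₂.PosSemidef) (hη₂tr : η₂.trace = 1) (hη₂ψ : η₂ *ᵥ ψ₂ = 0)
    (ε₁ ε₂ : ℝ) (hε₁ : ε₁ ∈ Set.Icc (0 : ℝ) 1) (hε₂ : ε₂ ∈ Set.Icc (0 : ℝ) 1) :
    ((mixState ψ₁ η₁ ε₁ * mixState ψ₂ η₂ ε₂ + mixState ψ₂ η₂ ε₂ * mixState ψ₁ η₁ ε₁) *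
        (mixState ψ₁ η₁ ε₁ * mixState ψ₂ η₂ ε₂ +
          mixState ψ₂ η₂ ε₂ * mixState ψ₁ η₁ ε₁)).trace
      - ((mixState ψ₁ η₁ ε₁ * mixState ψ₂ η₂ ε₂ +
          mixState ψ₂ η₂ ε₂ * mixState ψ₁ η₁ ε₁).trace) ^ 2
      = (ε₁ : ℂ) ^ 2 * (ε₂ : ℂ) ^ 2 *
          (((η₁ * η₂ + η₂ * η₁) * (η₁ * η₂ + η₂ * η₁)).trace
            - ((η₁ * η₂ + η₂ * η₁).trace) ^ 2)
        - 4 * (ε₁ : ℂ) * (ε₂ : ℂ) * (1 - (ε₁ : ℂ)) * (1 - (ε₂ : ℂ)) *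
            (η₁ * η₂ + η₂ * η₁).trace :=
  purity_identity_parallel_case_general ψ₁ ψ₂ hψ₁ c hc hψ₂ η₁ η₂ hη₁ hη₁ψ hη₂ hη₂ψ ε₁ ε₂
end

section
/- (Generalization of Theorem 1 to projections) Let P₁ be a rank-one orthogonal projection and P₂ an orthogonal projection on ℂ^D, and suppose P₁ and P₂ do not commute, [P₁,P₂] ≠ 0. Then tr[(P₁P₂)²] + tr[P₁P₂] − 2(tr[P₁P₂])² > 0. -/
/-!
Since `P₁` has rank one, `P₁ M P₁ = tr(P₁ M) P₁` for every `M`; with `t = tr(P₁ P₂)` this gives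
`tr[(P₁ P₂)²] = t²`, so the left-hand side is `t (1 - t)`. Both factors are squared
Hilbert–Schmidt norms, `t = ‖P₂ P₁‖²` and `1 - t = ‖(1 - P₂) P₁‖²`, and neither vanishes:
`P₂ P₁ = 0` or `P₂ P₁ = P₁` would make `P₁` and `P₂` commute.
-/

open Matrix ComplexOrder

open Module LinearMap in
/-- `e ∘ g` restricts to an endomorphism of the line `range e`, hence to a homothety there. -/
theorem LinearMap.exists_comp_comp_eq_smul_of_finrank_range_eq_one {K V : Type*} [Field K]
    [AddCommGroup V] [Module K V] {e : V →ₗ[K] V} (h : finrank K (range e) = 1)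
    (g : V →ₗ[K] V) : ∃ c : K, e ∘ₗ g ∘ₗ e = c • e := by
  let u : range e →ₗ[K] range e :=
    codRestrict (range e) (e ∘ₗ g ∘ₗ (range e).subtype) fun x ↦ mem_range_self e _
  obtain ⟨c, hc, -⟩ := u.existsUnique_eq_smul_id_of_finrank_eq_one h
  refine ⟨c, LinearMap.ext fun x ↦ ?_⟩
  simpa [u] using congr(($hc ⟨e x, mem_range_self e x⟩ : V))

namespace Matrix

theorem mul_mul_self_eq_trace_mul_smul {K n : Type*} [Field K] [CharZero K] [Fintype n]
    [DecidableEq n] {P : Matrix n n K} (hP : IsIdempotentElem P) (htr : P.trace = 1)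
    (M : Matrix n n K) : P * M * P = (P * M).trace • P := by
  -- the trace of an idempotent is the dimension of its range
  have hrank : Module.finrank K (LinearMap.range (toLin' P)) = 1 := by
    have hP' : IsIdempotentElem (toLin' P) := hP.map toLinAlgEquiv'
    have := ((LinearMap.isProj_range_iff_isIdempotentElem _).2 hP').trace
    rw [trace_toLin'_eq, htr] at this
    exact_mod_cast this.symm
  obtain ⟨c, hc⟩ := LinearMap.exists_comp_comp_eq_smul_of_finrank_range_eq_one hrank (toLin' M)
  have hc' : P * M * P = c • P := by
    apply toLin'.injective
    simpa [toLin'_mul, Module.End.mul_eq_comp, LinearMap.comp_assoc] using hc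
  have hc_eq : (P * M).trace = c := by
    simpa [trace_mul_cycle P M P, ← Matrix.mul_assoc, hP.eq, htr] using congr(trace $hc')
  rw [hc', hc_eq]

theorem trace_mul_pos_of_not_commute {𝕜 n : Type*} [RCLike 𝕜] [Fintype n]
    {P Q : Matrix n n 𝕜} (hP : IsStarProjection P) (hQ : IsStarProjection Q)
    (hPQ : ¬Commute P Q) : 0 < (P * Q).trace := by
  have hQP : Q * P ≠ 0 := fun h ↦
    hPQ (hQ.isSelfAdjoint.commute_of_mul_eq_zero hP.isSelfAdjoint h).symm
  have hgram : ((Q * P)ᴴ * (Q * P)).trace = (P * Q).trace := by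
    rw [conjTranspose_mul, ← star_eq_conjTranspose, ← star_eq_conjTranspose,
      hP.isSelfAdjoint.star_eq, hQ.isSelfAdjoint.star_eq]
    calc (P * Q * (Q * P)).trace = (P * (Q * Q) * P).trace := by simp only [Matrix.mul_assoc]
      _ = (P * P * Q).trace := by rw [hQ.isIdempotentElem.eq, trace_mul_cycle]
      _ = (P * Q).trace := by rw [hP.isIdempotentElem.eq]
  rw [← hgram]
  exact (posSemidef_conjTranspose_mul_self _).trace_nonneg.lt_of_ne'
    (trace_conjTranspose_mul_self_eq_zero_iff.not.mpr hQP)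

end Matrix

/-- Generalization of Theorem 1 to projections: Let `P₁` be a rank-one
orthogonal projection (`tr P₁ = 1`) and `P₂` an orthogonal projection on `ℂ^D` that do
not commute.  Then `tr[(P₁P₂)²] + tr[P₁P₂] − 2(tr[P₁P₂])² > 0`. -/
theorem rank_one_projection_purity_pos {D : ℕ} (P₁ P₂ : Matrix (Fin D) (Fin D) ℂ)
    (hP₁herm : P₁.IsHermitian) (hP₁proj : P₁ * P₁ = P₁) (hP₁tr : P₁.trace = 1)
    (hP₂herm : P₂.IsHermitian) (hP₂proj : P₂ * P₂ = P₂)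
    (hcomm : P₁ * P₂ ≠ P₂ * P₁) :
    0 < (((P₁ * P₂) * (P₁ * P₂)).trace + (P₁ * P₂).trace
          - 2 * ((P₁ * P₂).trace) ^ 2).re := by
  have hP₁ : IsStarProjection P₁ := ⟨hP₁proj, hP₁herm⟩
  have hP₂ : IsStarProjection P₂ := ⟨hP₂proj, hP₂herm⟩
  have hnc : ¬Commute P₁ P₂ := hcomm
  set t := (P₁ * P₂).trace
  have hsq : ((P₁ * P₂) * (P₁ * P₂)).trace = t * t := by
    rw [← Matrix.mul_assoc, mul_mul_self_eq_trace_mul_smul hP₁.isIdempotentElem hP₁tr,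
      smul_mul, trace_smul, smul_eq_mul]
  have ht : 0 < t := trace_mul_pos_of_not_commute hP₁ hP₂ hnc
  have ht' : 0 < 1 - t := by
    have hnc' : ¬Commute P₁ (1 - P₂) := fun h ↦
      hnc (by simpa using (Commute.one_right P₁).sub_right h)
    have := trace_mul_pos_of_not_commute hP₁ hP₂.one_sub hnc'
    rwa [mul_sub, mul_one, trace_sub, hP₁tr] at this
  have hfactor : t * t + t - 2 * t ^ 2 = t * (1 - t) := by ring
  rw [hsq, hfactor]
  exact (Complex.pos_iff.1 (mul_pos ht ht')).1
end

section
/- (Three-level example: quantumness is present) Let P₁ = diag(1,1,0) and P₂ = R · diag(0,1,1) · Rᵀ as 3×3 matrices, where R is the rotation matrix with rows (cosθ, 0, −sinθ), (0, 1, 0), (sinθ, 0, cosθ), and set ρ₁ = P₁/2, ρ₂ = P₂/2. If sinθ · cosθ ≠ 0, then the anticommutator {ρ₁,ρ₂} = ρ₁ρ₂ + ρ₂ρ₁ has a negative eigenvalue; in particular it is not positive semidefinite. -/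
/-!
Since `R` fixes `e₂` and sends `e₃` to `u = (-sin θ, 0, cos θ)`, `P₂` is the projection onto
`span {e₂, u}`, and a direct computation gives
`{ρ₁, ρ₂} = [[s²/2, 0, -sc/4], [0, 1/2, 0], [-sc/4, 0, 0]]` with `s = sin θ`, `c = cos θ`.
This Hermitian matrix has a vanishing diagonal entry in a row with a nonzero off-diagonal entry,
which a positive semidefinite matrix cannot have: the `2 × 2` principal minor on indices `1, 3`
is `-(sc/4)² < 0`.
-/

open Matrix ComplexOrder

/-- The projection `P₁ = diag(1,1,0)`. -/
noncomputable def projOne : Matrix (Fin 3) (Fin 3) ℂ := !![1, 0, 0; 0, 1, 0; 0, 0, 0]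

/-- The diagonal matrix `diag(0,1,1)`. -/
noncomputable def diagZeroOneOne : Matrix (Fin 3) (Fin 3) ℂ :=
  !![0, 0, 0; 0, 1, 0; 0, 0, 1]

/-- The rotation matrix with rows `(cos θ, 0, −sin θ)`, `(0, 1, 0)`, `(sin θ, 0, cos θ)`. -/
noncomputable def rotMat (θ : ℝ) : Matrix (Fin 3) (Fin 3) ℂ :=
  !![(Real.cos θ : ℂ), 0, -(Real.sin θ : ℂ);
     0, 1, 0;
     (Real.sin θ : ℂ), 0, (Real.cos θ : ℂ)]

section

variable {𝕜 n : Type*} [RCLike 𝕜] [Fintype n]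

theorem Matrix.IsHermitian.exists_re_dotProduct_mulVec_neg_of_diag_eq_zero [DecidableEq n]
    {A : Matrix n n 𝕜} (hA : A.IsHermitian) {i k : n} (hkk : A k k = 0)
    (hA_ik : A i k ≠ 0) :
    ∃ v : n → 𝕜, RCLike.re (star v ⬝ᵥ A *ᵥ v) < 0 := by
  -- on `v = a • eᵢ + t • eₖ`, `a = A i k`, `t` real, the form is `‖a‖² (re (A i i) + 2 t)`
  obtain ⟨t, ht⟩ : ∃ t : ℝ, RCLike.re (A i i) + 2 * t = -2 :=
    ⟨-RCLike.re (A i i) / 2 - 1, by ring⟩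
  refine ⟨Pi.single i (A i k) + Pi.single k (t : 𝕜), ?_⟩
  have hki : A k i = star (A i k) := (hA.apply k i).symm
  have hii : RCLike.im (A i i) = 0 := RCLike.conj_eq_iff_im.mp (hA.apply i i)
  have ha : 0 < RCLike.re (A i k) * RCLike.re (A i k) + RCLike.im (A i k) * RCLike.im (A i k) := by
    simpa [RCLike.normSq_apply] using RCLike.normSq_pos.mpr hA_ik
  simp [mulVec_add, mulVec_single, hkk, hki, hii, RCLike.smul_re, RCLike.mul_re]
  nlinarith

theorem Matrix.not_posSemidef_of_re_dotProduct_mulVec_neg {A : Matrix n n 𝕜} {v : n → 𝕜}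
    (hv : RCLike.re (star v ⬝ᵥ A *ᵥ v) < 0) : ¬ A.PosSemidef :=
  fun hA ↦ hv.not_ge (RCLike.nonneg_iff.mp (hA.dotProduct_mulVec_nonneg v)).1

end

theorem rotMat_mul_diagZeroOneOne_mul_transpose (θ : ℝ) :
    rotMat θ * diagZeroOneOne * (rotMat θ)ᵀ =
      !![(Real.sin θ : ℂ) ^ 2, 0, -(Real.sin θ * Real.cos θ : ℂ);
        0, 1, 0;
        -(Real.sin θ * Real.cos θ : ℂ), 0, (Real.cos θ : ℂ) ^ 2] := by
  unfold rotMat diagZeroOneOne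
  generalize (Real.sin θ : ℂ) = s
  generalize (Real.cos θ : ℂ) = c
  ext i j
  fin_cases i <;> fin_cases j <;> simp [mul_apply, Fin.sum_univ_three] <;> ring

theorem half_projOne_anticommutator (s c : ℂ) :
    (2 : ℂ)⁻¹ • projOne *
          ((2 : ℂ)⁻¹ • !![s ^ 2, 0, -(s * c); 0, 1, 0; -(s * c), 0, c ^ 2]) +
        (2 : ℂ)⁻¹ • !![s ^ 2, 0, -(s * c); 0, 1, 0; -(s * c), 0, c ^ 2] *
          ((2 : ℂ)⁻¹ • projOne) =
      !![s ^ 2 / 2, 0, -(s * c) / 4; 0, 1 / 2, 0; -(s * c) / 4, 0, 0] := by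
  unfold projOne
  ext i j
  fin_cases i <;> fin_cases j <;> simp <;> ring

theorem isHermitian_threeLevelAnticommutator (s c : ℝ) :
    (!![(s : ℂ) ^ 2 / 2, 0, -(s * c : ℂ) / 4;
        0, 1 / 2, 0;
        -(s * c : ℂ) / 4, 0, 0]).IsHermitian := by
  ext i j
  fin_cases i <;> fin_cases j <;> simp [Complex.conj_ofReal]

/-- Three-level example, quantumness is present: With
`P₁ = diag(1,1,0)`, `P₂ = R · diag(0,1,1) · Rᵀ`, `ρ₁ = P₁/2`, `ρ₂ = P₂/2`, and
`sin θ · cos θ ≠ 0`, the anticommutator `{ρ₁,ρ₂} = ρ₁ρ₂ + ρ₂ρ₁` has a negative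
eigenvalue (i.e. `⟨v, {ρ₁,ρ₂} v⟩ < 0` for some `v`); in particular it is not
positive semidefinite. -/
theorem three_level_example_negative_eigenvalue (θ : ℝ)
    (hθ : Real.sin θ * Real.cos θ ≠ 0)
    (P₂ ρ₁ ρ₂ : Matrix (Fin 3) (Fin 3) ℂ)
    (hP₂ : P₂ = rotMat θ * diagZeroOneOne * (rotMat θ)ᵀ)
    (hρ₁ : ρ₁ = (2 : ℂ)⁻¹ • projOne) (hρ₂ : ρ₂ = (2 : ℂ)⁻¹ • P₂) :
    (∃ v : Fin 3 → ℂ, (star v ⬝ᵥ (ρ₁ * ρ₂ + ρ₂ * ρ₁) *ᵥ v).re < 0) ∧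
      ¬ (ρ₁ * ρ₂ + ρ₂ * ρ₁).PosSemidef := by
  subst hP₂ hρ₁ hρ₂
  rw [rotMat_mul_diagZeroOneOne_mul_transpose, half_projOne_anticommutator]
  have hM := isHermitian_threeLevelAnticommutator (Real.sin θ) (Real.cos θ)
  obtain ⟨v, hv⟩ :=
    hM.exists_re_dotProduct_mulVec_neg_of_diag_eq_zero (i := 0) (k := 2) rfl
      (div_ne_zero (neg_ne_zero.mpr (mod_cast hθ)) four_ne_zero)
  exact ⟨⟨v, hv⟩, not_posSemidef_of_re_dotProduct_mulVec_neg hv⟩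
end
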